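/- Let n, r be natural numbers with r ≥ 1, and let l : Fin r → ℕ with each l_j ≥ 1 and l_1 + ⋯ + l_r = n (so r ≤ n). Let R be a commutative ℚ-algebra, let ħ ∈ R be a unit, and let P ∈ R satisfy P^{n+1} = 0. Set B = ∏_{j=1}^{r} (l_j)! ∈ R (via ℕ → R), define Γ(d) = (∏_{j=1}^{r} ∏_{m=0}^{d·l_j}(l_j·P + m·ħ)) · ((∏_{m=1}^{d}(P + m·ħ))⁻¹)^{n+1} ∈ R, F = Σ_{d≥0} Γ(d)·X^d ∈ R[[X]], E = Σ_{k≥0} ((−B·ħ⁻¹)^k / k!)·X^k ∈ R[[X]] (the exponential series exp(−(B/ħ)X)), and G = E·F. Define the operator 𝔇 : R[[X]] → R[[X]] by 𝔇(f) = P·f + ħ·X·f′ + B·X·f, where f′ is the formal derivative. Then 𝔇^{n+1-r}(G) = (∏_{j=1}^{r} l_j) · X · ((∏_{j=1}^{r} ∏_{m=1}^{l_j-1} (l_j·𝔇 + (m·ħ)·id)) G). -/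

import Mathlib

/-!
Put `E = exp(wX)` with `ħ w = -B`. Since `E' = w E`, the operator `𝔇` is conjugate under
multiplication by `E` to `D = P + ħ X d/dX`, which acts diagonally, multiplying `X^d` by
`P + dħ`. Both sides of the equation are therefore `E` times series in `D` applied to `F`,
and it suffices to compare coefficients. At `X^0` the identity is
`P^(n+1-r) · ∏ l_j · P^r = 0`. At `X^(d+1)` it is the recursion
`(P + (d+1)ħ)^(n+1-r) Γ(d+1) = ∏ l_j · Q(P + dħ) · Γ(d)`: going from `d` to `d+1`, the
numerator gains, for each `j`, the factors `l_j P + mħ` with `d l_j < m ≤ (d+1) l_j`, whose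
product is `Q_j(P + dħ) · l_j (P + (d+1)ħ)`, while the denominator gains `(P + (d+1)ħ)^(n+1)`;
this is a unit because `P` is nilpotent, and as `r + (n+1-r) = n+1` the powers cancel.
-/

open Finset PowerSeries

namespace PowerSeries

variable {R : Type*} [CommRing R]

noncomputable def diagonalEnd (w : ℕ → R) : Module.End R R⟦X⟧ where
  toFun f := mk fun d => w d * coeff d f
  map_add' f g := by ext d; simp [mul_add]
  map_smul' c f := by ext d; simp [mul_left_comm]

@[simp]
theorem coeff_diagonalEnd (w : ℕ → R) (f : R⟦X⟧) (d : ℕ) :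
    coeff d (diagonalEnd w f) = w d * coeff d f :=
  coeff_mk d fun d => w d * coeff d f

theorem coeff_aeval_diagonalEnd (w : ℕ → R) (p : Polynomial R) (f : R⟦X⟧) (d : ℕ) :
    coeff d (Polynomial.aeval (diagonalEnd w) p f) = p.eval (w d) * coeff d f := by
  induction p using Polynomial.induction_on generalizing f with
  | C a => simp [Module.algebraMap_end_apply]
  | add p q hp hq => simp [hp, hq, add_mul]
  | monomial k a h =>
    rw [pow_succ, ← mul_assoc, map_mul, Polynomial.aeval_X, Module.End.mul_apply, h,
      coeff_diagonalEnd]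
    simp [mul_assoc, mul_left_comm]

theorem coeff_diagonalEnd_pow (w : ℕ → R) (k : ℕ) (f : R⟦X⟧) (d : ℕ) :
    coeff d ((diagonalEnd w ^ k) f) = w d ^ k * coeff d f := by
  simpa using coeff_aeval_diagonalEnd w (.X ^ k) f d

theorem C_mul_add_C_mul_X_mul_derivative (a b : R) (f : R⟦X⟧) :
    C a * f + C b * (X * d⁄dX R f) = diagonalEnd (fun d => a + d * b) f := by
  ext (_ | d)
  · simp
  · simp only [map_add, coeff_C_mul, coeff_succ_X_mul, coeff_diagonalEnd, coeff_derivative]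
    push_cast
    ring

theorem derivative_rescale (a : R) (f : R⟦X⟧) :
    d⁄dX R (rescale a f) = C a * rescale a (d⁄dX R f) := by
  ext d
  simp only [coeff_derivative, coeff_rescale, coeff_C_mul]
  ring

theorem derivative_rescale_exp [Algebra ℚ R] (a : R) :
    d⁄dX R (rescale a (exp R)) = C a * rescale a (exp R) := by
  rw [derivative_rescale, derivative_exp]

theorem comp_mulLeft_rescale_exp [Algebra ℚ R] {a b c w : R} (hw : b * w = -c)
    {T : Module.End R R⟦X⟧}
    (hT : ∀ f, T f = C a * f + C b * (X * d⁄dX R f) + C c * (X * f)) :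
    T ∘ₗ LinearMap.mulLeft R (rescale w (exp R)) =
      LinearMap.mulLeft R (rescale w (exp R)) ∘ₗ diagonalEnd (fun d => a + d * b) := by
  have hCw : C b * C w = -C c := by rw [← map_mul, hw, map_neg]
  ext1 h
  simp only [LinearMap.comp_apply, LinearMap.mulLeft_apply, hT, Derivation.leibniz, smul_eq_mul,
    derivative_rescale_exp, ← C_mul_add_C_mul_X_mul_derivative]
  linear_combination (X * rescale w (exp R) * h) * hCw

end PowerSeries

theorem Polynomial.aeval_comp_eq_comp_aeval {R M N : Type*} [CommRing R] [AddCommGroup M]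
    [Module R M] [AddCommGroup N] [Module R N] {T : Module.End R M} {S : Module.End R N}
    {φ : N →ₗ[R] M} (h : T ∘ₗ φ = φ ∘ₗ S) (p : Polynomial R) :
    aeval T p ∘ₗ φ = φ ∘ₗ aeval S p := by
  induction p using Polynomial.induction_on with
  | C a => ext x; simp [Module.algebraMap_end_apply]
  | add p q hp hq => simp [LinearMap.add_comp, LinearMap.comp_add, hp, hq]
  | monomial k a h' =>
    rw [pow_succ, ← mul_assoc, map_mul (aeval T), map_mul (aeval S), aeval_X, aeval_X,
      Module.End.mul_eq_comp, Module.End.mul_eq_comp, LinearMap.comp_assoc, h,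
      ← LinearMap.comp_assoc, h', LinearMap.comp_assoc]

theorem IsNilpotent.isUnit_add_natCast_mul {R : Type*} [CommRing R] [Algebra ℚ R] {x y : R}
    (hx : IsNilpotent x) (hy : IsUnit y) {k : ℕ} (hk : k ≠ 0) : IsUnit (x + k * y) := by
  have hk : IsUnit (k : R) := by
    simpa using (isUnit_iff_ne_zero.2 (Nat.cast_ne_zero.2 hk : (k : ℚ) ≠ 0)).map (algebraMap ℚ R)
  exact hx.isUnit_add_right_of_commute (hk.mul hy) (Commute.all _ _)

theorem prod_range_succ_mul_add_one {R : Type*} [CommRing R] (x y : R) {L : ℕ} (hL : 1 ≤ L)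
    (e : ℕ) :
    ∏ m ∈ range ((e + 1) * L + 1), ((L : R) * x + m * y) =
      (∏ m ∈ range (e * L + 1), ((L : R) * x + m * y)) *
        (∏ m ∈ Icc 1 (L - 1), ((L : R) * (x + e * y) + m * y)) *
        ((L : R) * (x + ((e + 1 : ℕ) : R) * y)) := by
  obtain ⟨K, rfl⟩ : ∃ K, L = K + 1 := ⟨L - 1, by omega⟩
  rw [show (e + 1) * (K + 1) + 1 = (e * (K + 1) + 1) + K + 1 by ring, prod_range_succ,
    prod_range_add, Nat.add_sub_cancel, ← Ico_add_one_right_eq_Icc, prod_Ico_eq_prod_range,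
    Nat.add_sub_cancel]
  congr 2
  · refine prod_congr rfl fun i _ => ?_
    push_cast
    ring
  · push_cast
    ring

section Givental

variable {R : Type*} [CommRing R] {r : ℕ} (l : Fin r → ℕ) (P hbar : R)

def giventalNum (d : ℕ) : R :=
  ∏ j, ∏ m ∈ range (d * l j + 1), ((l j : R) * P + m * hbar)

def giventalDen (d : ℕ) : R :=
  ∏ m ∈ Icc 1 d, (P + m * hbar)

noncomputable def giventalCoeff (n d : ℕ) : R :=
  giventalNum l P hbar d * Ring.inverse (giventalDen P hbar d) ^ (n + 1)

noncomputable def picardFuchsPoly : Polynomial R :=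
  ∏ j, ∏ m ∈ Icc 1 (l j - 1), (Polynomial.C (l j : R) * .X + Polynomial.C (m * hbar))

theorem giventalNum_zero : giventalNum l P hbar 0 = (∏ j, (l j : R)) * P ^ r := by
  simp [giventalNum, prod_mul_distrib]

theorem giventalNum_succ (hl : ∀ j, 1 ≤ l j) (e : ℕ) :
    giventalNum l P hbar (e + 1) =
      giventalNum l P hbar e * (picardFuchsPoly l hbar).eval (P + e * hbar) *
        ((∏ j, (l j : R)) * (P + ((e + 1 : ℕ) : R) * hbar) ^ r) := by
  simp only [giventalNum, picardFuchsPoly, prod_range_succ_mul_add_one P hbar (hl _),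
    prod_mul_distrib, Polynomial.eval_prod, Polynomial.eval_add, Polynomial.eval_mul,
    Polynomial.eval_C, Polynomial.eval_X, prod_const, card_univ, Fintype.card_fin]

theorem giventalDen_succ (e : ℕ) :
    giventalDen P hbar (e + 1) = giventalDen P hbar e * (P + ((e + 1 : ℕ) : R) * hbar) :=
  prod_Icc_succ_top (by omega) _

variable {n : ℕ}

theorem pow_mul_giventalCoeff_zero (hrn : r ≤ n + 1) (hP : P ^ (n + 1) = 0) :
    P ^ (n + 1 - r) * giventalCoeff l P hbar n 0 = 0 := by
  rw [giventalCoeff, giventalNum_zero]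
  linear_combination (∏ j, (l j : R)) * Ring.inverse (giventalDen P hbar 0) ^ (n + 1) *
    (pow_sub_mul_pow P hrn).trans hP

theorem pow_mul_giventalCoeff_succ (hrn : r ≤ n + 1) (hl : ∀ j, 1 ≤ l j) (e : ℕ)
    (hu : IsUnit (P + ((e + 1 : ℕ) : R) * hbar)) :
    (P + ((e + 1 : ℕ) : R) * hbar) ^ (n + 1 - r) * giventalCoeff l P hbar n (e + 1) =
      (∏ j, (l j : R)) * (picardFuchsPoly l hbar).eval (P + e * hbar) *
        giventalCoeff l P hbar n e := by
  set u := P + ((e + 1 : ℕ) : R) * hbar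
  have hinv : u ^ (n + 1) * Ring.inverse u ^ (n + 1) = 1 := by
    rw [← mul_pow, Ring.mul_inverse_cancel u hu, one_pow]
  rw [giventalCoeff, giventalCoeff, giventalNum_succ l P hbar hl, giventalDen_succ,
    Ring.mul_inverse_rev, mul_pow]
  linear_combination (giventalNum l P hbar e * (picardFuchsPoly l hbar).eval (P + e * hbar) *
      (∏ j, (l j : R)) * Ring.inverse (giventalDen P hbar e) ^ (n + 1)) *
    (Ring.inverse u ^ (n + 1) * pow_sub_mul_pow u hrn + hinv)

theorem diagonalEnd_pow_mk_giventalCoeff [Algebra ℚ R] (hl : ∀ j, 1 ≤ l j) (hrn : r ≤ n + 1)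
    (hP : P ^ (n + 1) = 0) (hu : IsUnit hbar) :
    (diagonalEnd (fun d => P + d * hbar) ^ (n + 1 - r)) (mk (giventalCoeff l P hbar n)) =
      C (∏ j, (l j : R)) * X *
        Polynomial.aeval (diagonalEnd (fun d => P + d * hbar)) (picardFuchsPoly l hbar)
          (mk (giventalCoeff l P hbar n)) := by
  ext (_ | e)
  · simpa [coeff_diagonalEnd_pow, mul_assoc] using pow_mul_giventalCoeff_zero l P hbar hrn hP
  · have hunit := IsNilpotent.isUnit_add_natCast_mul ⟨n + 1, hP⟩ hu e.succ_ne_zero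
    rw [mul_assoc, coeff_C_mul, coeff_succ_X_mul, coeff_diagonalEnd_pow, coeff_aeval_diagonalEnd,
      coeff_mk, coeff_mk, pow_mul_giventalCoeff_succ l P hbar hrn hl e hunit, mul_assoc]

end Givental

theorem givental_picard_fuchs_degree_n_general
    (n r : ℕ) (l : Fin r → ℕ) (hl : ∀ j, 1 ≤ l j)
    (hsum : ∑ j, l j = n)
    (R : Type*) [CommRing R] [Algebra ℚ R] (hbar : R) (hu : IsUnit hbar)
    (P : R) (hP : P ^ (n + 1) = 0)
    (B : R)
    (Γ : ℕ → R)
    (hΓ : ∀ d : ℕ, Γ d =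
      (∏ j : Fin r, ∏ m ∈ Finset.range (d * l j + 1), ((l j : R) * P + (m : R) * hbar)) *
        (Ring.inverse (∏ m ∈ Finset.Icc 1 d, (P + (m : R) * hbar))) ^ (n + 1))
    (F : PowerSeries R) (hF : F = PowerSeries.mk Γ)
    (E : PowerSeries R)
    (hE : E = PowerSeries.mk fun k : ℕ => ((Nat.factorial k : ℚ)⁻¹) • (-(B * Ring.inverse hbar)) ^ k)
    (G : PowerSeries R) (hG : G = E * F)
    (𝔇 : Module.End R (PowerSeries R))
    (h𝔇 : ∀ f : PowerSeries R,
      𝔇 f = PowerSeries.C P * f + PowerSeries.C hbar * (PowerSeries.X * f.derivativeFun)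
          + PowerSeries.C B * (PowerSeries.X * f)) :
    (𝔇 ^ (n + 1 - r)) G =
      PowerSeries.C (∏ j : Fin r, (l j : R)) * PowerSeries.X *
        ((Polynomial.aeval 𝔇
            (∏ j : Fin r, ∏ m ∈ Finset.Icc 1 (l j - 1),
              (Polynomial.C (l j : R) * Polynomial.X + Polynomial.C ((m : R) * hbar)))) G) := by
  have hrn : r ≤ n + 1 := by
    have := card_nsmul_le_sum univ l 1 fun j _ => hl j
    simp only [card_univ, Fintype.card_fin, smul_eq_mul, mul_one, hsum] at this
    omega
  have hE' : E = rescale (-(B * Ring.inverse hbar)) (exp R) := by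
    ext k
    simp [hE, Algebra.smul_def, mul_comm]
  have hF' : F = mk (giventalCoeff l P hbar n) := hF.trans (congrArg mk (funext hΓ))
  have hw : hbar * -(B * Ring.inverse hbar) = -B := by
    rw [mul_neg, mul_left_comm, Ring.mul_inverse_cancel hbar hu, mul_one]
  have hconj := comp_mulLeft_rescale_exp hw h𝔇
  rw [← hE'] at hconj
  have hpow := LinearMap.congr_fun (Module.End.commute_pow_left_of_commute hconj (n + 1 - r)) F
  have haeval := LinearMap.congr_fun
    (Polynomial.aeval_comp_eq_comp_aeval hconj (picardFuchsPoly l hbar)) F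
  simp only [LinearMap.comp_apply, LinearMap.mulLeft_apply] at hpow haeval
  calc (𝔇 ^ (n + 1 - r)) G
      = E * (diagonalEnd (fun d => P + d * hbar) ^ (n + 1 - r)) F := by rw [hG, hpow]
    _ = C (∏ j, (l j : R)) * X *
          (E * Polynomial.aeval (diagonalEnd (fun d => P + d * hbar)) (picardFuchsPoly l hbar) F) :=
        by rw [hF', diagonalEnd_pow_mk_giventalCoeff l P hbar hl hrn hP hu]; ring
    _ = C (∏ j, (l j : R)) * X * Polynomial.aeval 𝔇 (picardFuchsPoly l hbar) G := by
        rw [hG, haeval]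

/-- Givental's theorem for a complete intersection of multidegree `(l 1, …, l r)` in `ℙⁿ`
with `∑ l j = n`: the series `G = exp(-(B/ħ)X)·F` satisfies the modified Picard–Fuchs
equation with `𝔇 = P + ħ·q·d/dq + B·q`, where `B = l₁!⋯l_r!`. -/
theorem givental_picard_fuchs_degree_n
    (n r : ℕ) (hr : 1 ≤ r) (l : Fin r → ℕ) (hl : ∀ j, 1 ≤ l j)
    (hsum : ∑ j, l j = n)
    (R : Type*) [CommRing R] [Algebra ℚ R] (hbar : R) (hu : IsUnit hbar)
    (P : R) (hP : P ^ (n + 1) = 0)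
    (B : R) (hB : B = ∏ j : Fin r, ((l j).factorial : R))
    (Γ : ℕ → R)
    (hΓ : ∀ d : ℕ, Γ d =
      (∏ j : Fin r, ∏ m ∈ Finset.range (d * l j + 1), ((l j : R) * P + (m : R) * hbar)) *
        (Ring.inverse (∏ m ∈ Finset.Icc 1 d, (P + (m : R) * hbar))) ^ (n + 1))
    (F : PowerSeries R) (hF : F = PowerSeries.mk Γ)
    (E : PowerSeries R)
    (hE : E = PowerSeries.mk fun k : ℕ => ((Nat.factorial k : ℚ)⁻¹) • (-(B * Ring.inverse hbar)) ^ k)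
    (G : PowerSeries R) (hG : G = E * F)
    (𝔇 : Module.End R (PowerSeries R))
    (h𝔇 : ∀ f : PowerSeries R,
      𝔇 f = PowerSeries.C P * f + PowerSeries.C hbar * (PowerSeries.X * f.derivativeFun)
          + PowerSeries.C B * (PowerSeries.X * f)) :
    (𝔇 ^ (n + 1 - r)) G =
      PowerSeries.C (∏ j : Fin r, (l j : R)) * PowerSeries.X *
        ((Polynomial.aeval 𝔇
            (∏ j : Fin r, ∏ m ∈ Finset.Icc 1 (l j - 1),
              (Polynomial.C (l j : R) * Polynomial.X + Polynomial.C ((m : R) * hbar)))) G) :=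
  givental_picard_fuchs_degree_n_general n r l hl hsum R hbar hu P hP B Γ hΓ F hF E hE G hG 𝔇 h𝔇
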